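/- arXiv:1703.01034 — 7 statements merged into one kernel-verified Lean document; each statement's English description precedes it below -/
import Mathlib

section
/- Let k_x ∈ ℂ, let k_y, k_y' ∈ ℂ (the vertical wavenumbers of two adjacent layers), let ν > 0 be real, let d, d' ∈ ℝ (the interface heights, with the lower interface at depth d'), let A ∈ ℂ (the amplitude in the upper layer), and let R̃' ∈ ℂ (the generalized reflection coefficient of the lower layer). Define R = (k_y − ν k_y')/(k_y + ν k_y'), T = 2k_y/(k_y + ν k_y'), R' = (k_y' − k_y/ν)/(k_y' + k_y/ν), T' = 2k_y'/(k_y' + k_y/ν), E = e^{2 i k_y'(d'−d)}, the generalized reflection coefficient R̃ = R + T'·R̃'·T·E/(1 − R'·R̃'·E), and the lower-layer amplitude A' = T·A·e^{i(k_y − k_y')d}/(1 − R'·R̃'·E). Assume k_y + ν k_y' ≠ 0, k_y' + k_y/ν ≠ 0 and 1 − R'·R̃'·E ≠ 0. Define u(x,y) = A·e^{i k_x x}(e^{−i k_y y} + R̃·e^{i k_y(y+2d)}) and u'(x,y) = A'·e^{i k_x x}(e^{−i k_y' y} + R̃'·e^{i k_y'(y+2d')}). Then for every x ∈ ℝ one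 has u(x,−d) = u'(x,−d) and ∂u/∂y(x,−d) = ν·∂u'/∂y(x,−d). -/
/-!
On each side of the interface the vertical profile is a standing wave, so at `y = -d` the
value and the `y`-derivative of `u` are `A e^{i k_y d} (1 + R̃)` and
`i k_y A e^{i k_y d} (R̃ - 1)`, and those of `u'` are the same expressions with primes and
`R̃` replaced by `ρ = R̃' E`. The Fresnel coefficients of the reversed interface are
`R' = -R` and `T' = 1 + R' = 1 - R`, while `T = 1 + R` and `k_y (1 - R) = ν k_y' T`. With
these, clearing the denominator `1 - R' ρ = 1 + R ρ` of the recursion for `R̃` turns both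
transmission conditions into polynomial identities in `R` and `ρ`.
-/

open Complex

noncomputable section

/-- With `k = k_{jy}`, `k' = k_{j+1,y}` and `μ = ν_j` this is the paper's `R_{j,j+1}`; the
reversed interface `j + 1 → j` is `reflCoeff k' k μ⁻¹`. -/
def reflCoeff (k k' μ : ℂ) : ℂ := (k - μ * k') / (k + μ * k')

def transCoeff (k k' μ : ℂ) : ℂ := 2 * k / (k + μ * k')

/-- The generalized reflection coefficient of recursion (5), where `ρ = R̃' E` is the
generalized reflection coefficient of the lower layer brought up to the interface. -/
def genReflCoeff (k k' μ ρ : ℂ) : ℂ :=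
  reflCoeff k k' μ + transCoeff k' k μ⁻¹ * ρ * transCoeff k k' μ / (1 - reflCoeff k' k μ⁻¹ * ρ)

def standingWave (k R : ℂ) (h y : ℝ) : ℂ :=
  exp (-I * k * y) + R * exp (I * k * (y + 2 * h))

section Fresnel

variable {k k' μ : ℂ}

theorem reflCoeff_swap (hμ : μ ≠ 0) : reflCoeff k' k μ⁻¹ = -reflCoeff k k' μ := by
  have hnum : k' - μ⁻¹ * k = μ⁻¹ * -(k - μ * k') := by field_simp; ring
  have hden : k' + μ⁻¹ * k = μ⁻¹ * (k + μ * k') := by field_simp; ring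
  rw [reflCoeff, reflCoeff, hnum, hden, mul_div_mul_left _ _ (inv_ne_zero hμ), neg_div]

theorem one_add_reflCoeff (h : k + μ * k' ≠ 0) : 1 + reflCoeff k k' μ = transCoeff k k' μ := by
  rw [reflCoeff, transCoeff]
  field_simp
  ring

theorem mul_one_sub_reflCoeff (h : k + μ * k' ≠ 0) :
    k * (1 - reflCoeff k k' μ) = μ * k' * transCoeff k k' μ := by
  rw [reflCoeff, transCoeff]
  field_simp
  ring

theorem one_add_genReflCoeff {ρ : ℂ} (hμ : μ ≠ 0) (h : k + μ * k' ≠ 0)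
    (h' : k' + μ⁻¹ * k ≠ 0) (hD : 1 - reflCoeff k' k μ⁻¹ * ρ ≠ 0) :
    (1 + genReflCoeff k k' μ ρ) * (1 - reflCoeff k' k μ⁻¹ * ρ) = transCoeff k k' μ * (1 + ρ) := by
  rw [genReflCoeff, add_mul, add_mul, div_mul_cancel₀ _ hD, ← one_add_reflCoeff h,
    ← one_add_reflCoeff h', reflCoeff_swap hμ]
  ring

theorem mul_genReflCoeff_sub_one {ρ : ℂ} (hμ : μ ≠ 0) (h : k + μ * k' ≠ 0)
    (h' : k' + μ⁻¹ * k ≠ 0) (hD : 1 - reflCoeff k' k μ⁻¹ * ρ ≠ 0) :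
    k * (genReflCoeff k k' μ ρ - 1) * (1 - reflCoeff k' k μ⁻¹ * ρ) =
      μ * k' * transCoeff k k' μ * (ρ - 1) := by
  rw [genReflCoeff, mul_assoc, sub_mul, add_mul, div_mul_cancel₀ _ hD, ← one_add_reflCoeff h,
    ← one_add_reflCoeff h', reflCoeff_swap hμ]
  have hflux := mul_one_sub_reflCoeff h
  rw [← one_add_reflCoeff h] at hflux
  linear_combination (ρ - 1) * hflux

end Fresnel

section StandingWave

variable (k R : ℂ) (h d : ℝ)

private theorem exp_incident_neg : exp (-I * k * ↑(-d)) = exp (I * k * d) := by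
  push_cast
  ring_nf

private theorem exp_reflected_neg :
    exp (I * k * (↑(-d) + 2 * h)) = exp (I * k * d) * exp (2 * I * k * (h - d)) := by
  rw [← exp_add]
  push_cast
  ring_nf

theorem standingWave_neg :
    standingWave k R h (-d) = exp (I * k * d) * (1 + R * exp (2 * I * k * (h - d))) := by
  rw [standingWave, exp_incident_neg, exp_reflected_neg]
  ring

theorem hasDerivAt_standingWave (y : ℝ) :
    HasDerivAt (standingWave k R h)
      (I * k * (R * exp (I * k * (y + 2 * h)) - exp (-I * k * y))) y := by
  have hy : HasDerivAt (fun y : ℝ => (y : ℂ)) 1 y := (hasDerivAt_id y).ofReal_comp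
  have hinc := (hy.const_mul (-I * k)).cexp
  have hrefl := (((hy.add_const (2 * (h : ℂ))).const_mul (I * k)).cexp).const_mul R
  exact (hinc.add hrefl).congr_deriv (by ring)

theorem deriv_standingWave_neg :
    deriv (standingWave k R h) (-d) =
      I * k * exp (I * k * d) * (R * exp (2 * I * k * (h - d)) - 1) := by
  rw [(hasDerivAt_standingWave k R h (-d)).deriv, exp_incident_neg, exp_reflected_neg]
  ring

end StandingWave

end

/-- Transmission conditions on the flat interface `y = -d` between two adjacent planar
layers, satisfied by the closed-form planar layered-medium solution with amplitudes and
generalized reflection coefficients given by the recursions (4)-(5) of the paper. -/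
theorem stmt1 (kx ky ky' : ℂ) (ν : ℝ) (hν : 0 < ν) (d d' : ℝ) (A Rgen' : ℂ)
    (R T R' T' E Rgen A' : ℂ)
    (hR : R = (ky - (ν : ℂ) * ky') / (ky + (ν : ℂ) * ky'))
    (hT : T = 2 * ky / (ky + (ν : ℂ) * ky'))
    (hR' : R' = (ky' - ky / (ν : ℂ)) / (ky' + ky / (ν : ℂ)))
    (hT' : T' = 2 * ky' / (ky' + ky / (ν : ℂ)))
    (hE : E = Complex.exp (2 * Complex.I * ky' * ((d' : ℂ) - (d : ℂ))))
    (hRgen : Rgen = R + T' * Rgen' * T * E / (1 - R' * Rgen' * E))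
    (hA' : A' = T * A * Complex.exp (Complex.I * (ky - ky') * (d : ℂ)) / (1 - R' * Rgen' * E))
    (h1 : ky + (ν : ℂ) * ky' ≠ 0) (h2 : ky' + ky / (ν : ℂ) ≠ 0)
    (h3 : 1 - R' * Rgen' * E ≠ 0)
    (u u' : ℝ → ℝ → ℂ)
    (hu : ∀ x y : ℝ, u x y = A * Complex.exp (Complex.I * kx * (x : ℂ)) *
      (Complex.exp (-Complex.I * ky * (y : ℂ)) +
        Rgen * Complex.exp (Complex.I * ky * ((y : ℂ) + 2 * (d : ℂ)))))
    (hu' : ∀ x y : ℝ, u' x y = A' * Complex.exp (Complex.I * kx * (x : ℂ)) *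
      (Complex.exp (-Complex.I * ky' * (y : ℂ)) +
        Rgen' * Complex.exp (Complex.I * ky' * ((y : ℂ) + 2 * (d' : ℂ))))) :
    ∀ x : ℝ, u x (-d) = u' x (-d) ∧
      deriv (fun y : ℝ => u x y) (-d) = (ν : ℂ) * deriv (fun y : ℝ => u' x y) (-d) := by
  intro x
  have hν0 : (ν : ℂ) ≠ 0 := ofReal_ne_zero.mpr hν.ne'
  have hRc : R = reflCoeff ky ky' ν := hR
  have hTc : T = transCoeff ky ky' ν := hT
  have hR'c : R' = reflCoeff ky' ky (ν : ℂ)⁻¹ := by rw [hR', reflCoeff, div_eq_inv_mul ky]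
  have hT'c : T' = transCoeff ky' ky (ν : ℂ)⁻¹ := by rw [hT', transCoeff, div_eq_inv_mul ky]
  rw [div_eq_inv_mul ky] at h2
  have hD : 1 - reflCoeff ky' ky (ν : ℂ)⁻¹ * (Rgen' * E) ≠ 0 := by rwa [← hR'c, ← mul_assoc]
  have hRgen_eq : Rgen = genReflCoeff ky ky' ν (Rgen' * E) := by
    rw [hRgen, genReflCoeff, ← hRc, ← hTc, ← hR'c, ← hT'c]
    ring
  have hux : u x = fun y => A * exp (I * kx * x) * standingWave ky Rgen d y := funext (hu x)
  have hux' : u' x = fun y => A' * exp (I * kx * x) * standingWave ky' Rgen' d' y := funext (hu' x)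
  have hamp : A' * exp (I * ky' * d) * (1 - R' * Rgen' * E) = T * A * exp (I * ky * d) := by
    rw [hA', div_mul_eq_mul_div, div_mul_cancel₀ _ h3, mul_assoc, ← exp_add]
    ring_nf
  have hval := one_add_genReflCoeff hν0 h1 h2 hD
  have hflux := mul_genReflCoeff_sub_one hν0 h1 h2 hD
  rw [← hRgen_eq, ← hTc, ← hR'c, ← mul_assoc] at hval hflux
  simp only [hux, hux', deriv_const_mul_field, standingWave_neg, deriv_standingWave_neg, sub_self,
    mul_zero, exp_zero, mul_one, ← hE]
  constructor <;> apply mul_right_cancel₀ h3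
  · linear_combination A * exp (I * kx * x) * exp (I * ky * d) * hval
      - exp (I * kx * x) * (1 + Rgen' * E) * hamp
  · linear_combination A * exp (I * kx * x) * I * exp (I * ky * d) * hflux
      - ν * exp (I * kx * x) * I * ky' * (Rgen' * E - 1) * hamp
end

section
/- Let k > 0, α ∈ (−π, 0) and (x, y) ∈ ℝ². Then the function F(R) = ∫₀^π (cos(θ+α) − 1)·exp(−ik(x cos θ + y sin θ))·exp(ikR cos(θ+α)) dθ satisfies F(R) = O(R^{−1}) as R → ∞. -/
open scoped Real
open Complex Set Filter Asymptotics intervalIntegral MeasureTheory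

/-!
With `u = θ + α` we have `cos u - 1 = -tan (u / 2) * sin u`, and `-k sin u` is the derivative of
the phase `k cos u`. So the integrand is `g θ * φ' θ * exp (i R φ θ)` with `φ θ = k cos (θ + α)`
and `g θ = tan ((θ + α) / 2) / k * exp (-i k (x cos θ + y sin θ))`, which is smooth on a
neighbourhood of `[0, π]` because `|θ + α| < π` there. Since `i R φ' e^{i R φ}` is the derivative
of `e^{i R φ}`, one integration by parts bounds `R` times the integral uniformly in `R`.
-/

lemma Real.tan_half_mul_sin {u : ℝ} (hc : Real.cos (u / 2) ≠ 0) :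
    Real.tan (u / 2) * Real.sin u = 1 - Real.cos u := by
  obtain ⟨v, rfl⟩ : ∃ v, u = 2 * v := ⟨u / 2, by ring⟩
  rw [mul_div_cancel_left₀ v two_ne_zero] at *
  rw [Real.tan_eq_sin_div_cos, Real.sin_two_mul, Real.cos_two_mul']
  field_simp
  linear_combination Real.sin_sq_add_cos_sq v

lemma ContDiffOn.hasDerivAt_deriv_of_isOpen {E : Type*} [NormedAddCommGroup E] [NormedSpace ℝ E]
    {f : ℝ → E} {U : Set ℝ} (hf : ContDiffOn ℝ 1 f U) (hU : IsOpen U) {x : ℝ} (hx : x ∈ U) :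
    HasDerivAt f (deriv f x) x :=
  ((hf.differentiableOn one_ne_zero x hx).differentiableAt (hU.mem_nhds hx)).hasDerivAt

lemma norm_cexp_I_mul_ofReal_mul_ofReal (R t : ℝ) : ‖cexp (I * R * t)‖ = 1 := by
  rw [show I * R * t = ((R * t : ℝ) : ℂ) * I by push_cast; ring, norm_exp_ofReal_mul_I]

section IntegrationByParts

variable {a b : ℝ} {g g' : ℝ → ℂ} {φ φ' : ℝ → ℝ}

theorem integral_mul_deriv_mul_cexp_eq (R : ℝ) (hg : ∀ θ ∈ uIcc a b, HasDerivAt g (g' θ) θ)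
    (hg' : IntervalIntegrable g' volume a b) (hφ : ∀ θ ∈ uIcc a b, HasDerivAt φ (φ' θ) θ)
    (hφ' : IntervalIntegrable φ' volume a b) :
    I * R * ∫ θ in a..b, g θ * φ' θ * cexp (I * R * φ θ) =
      g b * cexp (I * R * φ b) - g a * cexp (I * R * φ a) -
        ∫ θ in a..b, g' θ * cexp (I * R * φ θ) := by
  have hv : ∀ θ ∈ uIcc a b, HasDerivAt (fun θ => cexp (I * R * φ θ))
      (cexp (I * R * φ θ) * (I * R * φ' θ)) θ := fun θ hθ =>
    ((hφ θ hθ).ofReal_comp.const_mul (I * R)).cexp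
  have hv' : IntervalIntegrable (fun θ => cexp (I * R * φ θ) * (I * R * φ' θ)) volume a b := by
    have hcont : ContinuousOn (fun θ => cexp (I * R * φ θ)) (uIcc a b) :=
      fun θ hθ => (hv θ hθ).continuousAt.continuousWithinAt
    have hφ'ℂ : IntervalIntegrable (fun θ => (φ' θ : ℂ)) volume a b :=
      ⟨hφ'.1.ofReal, hφ'.2.ofReal⟩
    exact (hφ'ℂ.const_mul (I * R)).continuousOn_mul hcont
  rw [← intervalIntegral.integral_const_mul, ← integral_mul_deriv_eq_deriv_mul hg hv hg' hv']
  congr 1 with θ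
  ring

theorem norm_integral_mul_deriv_mul_cexp_le (R : ℝ) (hg : ∀ θ ∈ uIcc a b, HasDerivAt g (g' θ) θ)
    (hg' : IntervalIntegrable g' volume a b) (hφ : ∀ θ ∈ uIcc a b, HasDerivAt φ (φ' θ) θ)
    (hφ' : IntervalIntegrable φ' volume a b) :
    ‖I * R * ∫ θ in a..b, g θ * φ' θ * cexp (I * R * φ θ)‖ ≤
      ‖g b‖ + ‖g a‖ + |∫ θ in a..b, ‖g' θ‖| := by
  rw [integral_mul_deriv_mul_cexp_eq R hg hg' hφ hφ']
  have hint : ‖∫ θ in a..b, g' θ * cexp (I * R * φ θ)‖ ≤ |∫ θ in a..b, ‖g' θ‖| := by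
    simpa only [norm_mul, norm_cexp_I_mul_ofReal_mul_ofReal, mul_one]
      using norm_integral_le_abs_integral_norm (f := fun θ => g' θ * cexp (I * R * φ θ))
  calc _ ≤ ‖g b * cexp (I * R * φ b)‖ + ‖g a * cexp (I * R * φ a)‖
          + ‖∫ θ in a..b, g' θ * cexp (I * R * φ θ)‖ := norm_sub_le_of_le (norm_sub_le _ _) le_rfl
    _ ≤ _ := by
      simp only [norm_mul, norm_cexp_I_mul_ofReal_mul_ofReal, mul_one]
      linarith

theorem isBigO_integral_mul_deriv_mul_cexp {U : Set ℝ} (hU : IsOpen U)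
    (hab : uIcc a b ⊆ U) (hg : ContDiffOn ℝ 1 g U) (hφ : ContDiffOn ℝ 1 φ U) :
    (fun R : ℝ => ∫ θ in a..b, g θ * deriv φ θ * cexp (I * R * φ θ)) =O[atTop] fun R => R⁻¹ := by
  have hbound := fun R : ℝ => norm_integral_mul_deriv_mul_cexp_le R
    (fun θ hθ => hg.hasDerivAt_deriv_of_isOpen hU (hab hθ))
    ((hg.continuousOn_deriv_of_isOpen hU le_rfl).mono hab).intervalIntegrable
    (fun θ hθ => hφ.hasDerivAt_deriv_of_isOpen hU (hab hθ))
    ((hφ.continuousOn_deriv_of_isOpen hU le_rfl).mono hab).intervalIntegrable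
  have hscaled : (fun R : ℝ => I * R * ∫ θ in a..b, g θ * deriv φ θ * cexp (I * R * φ θ))
      =O[atTop] fun _ => (1 : ℝ) :=
    .of_bound _ (.of_forall fun R => by simpa only [norm_one, mul_one] using hbound R)
  have hinv : (fun R : ℝ => (I * R)⁻¹) =O[atTop] fun R : ℝ => R⁻¹ :=
    .of_bound 1 (.of_forall fun R => by simp)
  refine (hinv.mul hscaled).congr' ?_ (by simp)
  filter_upwards [eventually_ne_atTop 0] with R hR
  rw [← mul_assoc, inv_mul_cancel₀ (by simp [hR]), one_mul]

end IntegrationByParts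

/-- The integration-by-parts estimate for the up-going plane wave contribution over the
upper semicircle: `F(R) = ∫₀^π (cos(θ+α) - 1) e^{-ik(x cos θ + y sin θ)} e^{ikR cos(θ+α)} dθ`
is `O(R⁻¹)` as `R → ∞`. -/
theorem stmt6 (k α x y : ℝ) (hk : 0 < k) (hα : α ∈ Set.Ioo (-π) 0) :
    (fun R : ℝ => ∫ θ in (0 : ℝ)..π,
        ((Real.cos (θ + α) - 1 : ℝ) : ℂ) *
          Complex.exp (-Complex.I * (k : ℂ) * ((x * Real.cos θ + y * Real.sin θ : ℝ) : ℂ)) *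
          Complex.exp (Complex.I * (k : ℂ) * (R : ℂ) * ((Real.cos (θ + α) : ℝ) : ℂ)))
      =O[Filter.atTop] fun R : ℝ => R⁻¹ := by
  obtain ⟨hα₁, hα₂⟩ := hα
  set U : Set ℝ := Ioo (-π - α) (π - α)
  have hsub : uIcc 0 π ⊆ U := by
    rw [uIcc_of_le Real.pi_pos.le]
    exact Icc_subset_Ioo (by linarith) (by linarith)
  have hcos : ∀ θ ∈ U, Real.cos ((θ + α) / 2) ≠ 0 := fun θ hθ =>
    (Real.cos_pos_of_mem_Ioo ⟨by linarith [hθ.1], by linarith [hθ.2]⟩).ne'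
  have hg : ContDiffOn ℝ 1 (fun θ => ((Real.tan ((θ + α) / 2) / k : ℝ) : ℂ) *
      cexp (-I * k * ((x * Real.cos θ + y * Real.sin θ : ℝ) : ℂ))) U := by
    refine ContDiffOn.mul (fun θ hθ => ContDiffAt.contDiffWithinAt ?_) ?_
    · have := (Real.contDiffAt_tan.2 (hcos θ hθ)).comp θ
        (by fun_prop : ContDiffAt ℝ 1 (fun θ => (θ + α) / 2) θ)
      exact ofRealCLM.contDiff.contDiffAt.comp θ (this.div_const k)
    · have hphase : ContDiff ℝ 1 fun θ : ℝ => x * Real.cos θ + y * Real.sin θ := by fun_prop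
      exact (contDiff_const.mul (ofRealCLM.contDiff.comp hphase)).cexp.contDiffOn
  have hφ : ContDiffOn ℝ 1 (fun θ => k * Real.cos (θ + α)) U := by fun_prop
  have hderiv : ∀ θ, deriv (fun θ => k * Real.cos (θ + α)) θ = -(k * Real.sin (θ + α)) := by
    intro θ; simp
  refine (isBigO_integral_mul_deriv_mul_cexp isOpen_Ioo hsub hg hφ).congr_left fun R =>
    integral_congr fun θ hθ => ?_
  have hhalf := congrArg ofReal (Real.tan_half_mul_sin (hcos θ (hsub hθ)))
  have hk' : (k : ℂ) ≠ 0 := ofReal_ne_zero.2 hk.ne'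
  simp only [hderiv]
  push_cast at hhalf ⊢
  rw [show I * R * (k * Complex.cos (θ + α)) = I * k * R * Complex.cos (θ + α) by ring]
  field_simp
  linear_combination -hhalf
end

section
/- Let k > 0, γ > 0, ξ ∈ ℝ and (x₁, x₂) ∈ ℝ². Then the function G(R) = ∫₀^π ((iγ sin θ + ξ|cos θ|)/k − 1)·exp(−ik(x₁ cos θ + x₂ sin θ))·exp(−R(γ sin θ − iξ|cos θ|)) dθ satisfies G(R) = O(R^{−1}) as R → ∞. -/
/-!
The last factor of the integrand has modulus `e^{-Rγ sin θ}` and the rest is continuous, hence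
bounded by some `C` on `[0, π]`. By the symmetry `θ ↦ π - θ` and Jordan's
inequality `sin θ ≥ 2θ/π` on `[0, π/2]`, `∫₀^π e^{-c sin θ} dθ ≤ π / c`, which for `c = Rγ`
gives the decay `O(R⁻¹)`.
-/

open Real Set Filter Asymptotics intervalIntegral

theorem integral_exp_neg_mul_le {a b : ℝ} (ha : 0 < a) :
    ∫ θ in (0 : ℝ)..b, exp (-(a * θ)) ≤ a⁻¹ := by
  have key : ∫ θ in (0 : ℝ)..b, exp (-(a * θ)) = a⁻¹ * (1 - exp (-(a * b))) := by
    have := integral_comp_mul_left (fun x => exp (-x)) ha.ne' (a := 0) (b := b)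
    simp only [mul_zero] at this
    rw [this, integral_comp_neg (fun x => exp x)]
    simp [integral_exp, smul_eq_mul]
  rw [key]
  have hexp := exp_pos (-(a * b))
  have hinv := inv_pos.2 ha
  nlinarith

theorem integral_exp_neg_mul_sin_le_half {c : ℝ} (hc : 0 < c) :
    ∫ θ in (0 : ℝ)..π / 2, exp (-(c * sin θ)) ≤ π / (2 * c) := by
  calc ∫ θ in (0 : ℝ)..π / 2, exp (-(c * sin θ))
      ≤ ∫ θ in (0 : ℝ)..π / 2, exp (-(2 * c / π * θ)) := by
        refine integral_mono_on (by positivity) (by apply Continuous.intervalIntegrable; fun_prop)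
          (by apply Continuous.intervalIntegrable; fun_prop) fun θ hθ => ?_
        have hsin := mul_le_sin hθ.1 hθ.2
        refine exp_le_exp.2 (neg_le_neg ?_)
        calc 2 * c / π * θ = c * (2 / π * θ) := by ring
          _ ≤ c * sin θ := by gcongr
    _ ≤ (2 * c / π)⁻¹ := integral_exp_neg_mul_le (by positivity)
    _ = π / (2 * c) := inv_div _ _

theorem integral_exp_neg_mul_sin_le {c : ℝ} (hc : 0 < c) :
    ∫ θ in (0 : ℝ)..π, exp (-(c * sin θ)) ≤ π / c := by
  have hint : ∀ a b : ℝ,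
      IntervalIntegrable (fun θ => exp (-(c * sin θ))) MeasureTheory.volume a b :=
    fun a b => by apply Continuous.intervalIntegrable; fun_prop
  have hsymm : ∫ θ in π / 2..π, exp (-(c * sin θ)) =
      ∫ θ in (0 : ℝ)..π / 2, exp (-(c * sin θ)) := by
    simpa [sin_pi_sub, show π - π / 2 = π / 2 by ring] using
      integral_comp_sub_left (fun θ => exp (-(c * sin θ))) π (a := π / 2) (b := π)
  rw [← integral_add_adjacent_intervals (hint 0 (π / 2)) (hint (π / 2) π), hsymm]
  have hhalf := integral_exp_neg_mul_sin_le_half hc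
  calc _ ≤ π / (2 * c) + π / (2 * c) := add_le_add hhalf hhalf
    _ = π / c := by field_simp; ring

theorem norm_exp_neg_mul_sub_I_mul (R a b : ℝ) :
    ‖Complex.exp (-(R : ℂ) * ((a : ℂ) - Complex.I * (b : ℂ)))‖ = exp (-(R * a)) := by
  rw [Complex.norm_exp]
  simp

theorem isBigO_integral_mul_exp_neg_mul_sin {A : ℝ → ℂ} (hA : ContinuousOn A (Icc 0 π))
    {c : ℝ} (hc : 0 < c) (ψ : ℝ → ℝ) :
    (fun R : ℝ => ∫ θ in (0 : ℝ)..π,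
        A θ * Complex.exp (-(R : ℂ) * (((c * sin θ : ℝ) : ℂ) - Complex.I * ((ψ θ : ℝ) : ℂ))))
      =O[atTop] fun R : ℝ => R⁻¹ := by
  obtain ⟨C, hC⟩ := isCompact_Icc.exists_bound_of_continuousOn hA
  have hC0 : 0 ≤ C := (norm_nonneg _).trans (hC 0 (left_mem_Icc.2 pi_pos.le))
  refine isBigO_iff.2 ⟨C * (π / c), ?_⟩
  filter_upwards [eventually_gt_atTop 0] with R hR
  have hpointwise : ∀ θ ∈ Ioc 0 π,
      ‖A θ * Complex.exp (-(R : ℂ) * (((c * sin θ : ℝ) : ℂ) - Complex.I * ((ψ θ : ℝ) : ℂ)))‖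
        ≤ C * exp (-(R * c * sin θ)) := fun θ hθ => by
    rw [norm_mul, norm_exp_neg_mul_sub_I_mul, ← mul_assoc]
    exact mul_le_mul_of_nonneg_right (hC θ (Ioc_subset_Icc_self hθ)) (exp_pos _).le
  calc _ ≤ ∫ θ in (0 : ℝ)..π, C * exp (-(R * c * sin θ)) :=
        norm_integral_le_of_norm_le pi_pos.le (.of_forall hpointwise)
          (by apply Continuous.intervalIntegrable; fun_prop)
    _ = C * ∫ θ in (0 : ℝ)..π, exp (-(R * c * sin θ)) := integral_const_mul _ _
    _ ≤ C * (π / (R * c)) := by gcongr; exact integral_exp_neg_mul_sin_le (by positivity)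
    _ = C * (π / c) * ‖R⁻¹‖ := by
        rw [norm_inv, Real.norm_of_nonneg hR.le]; field_simp

theorem stmt9_general (k γ ξ x₁ x₂ : ℝ) (hγ : 0 < γ) :
    (fun R : ℝ => ∫ θ in (0 : ℝ)..π,
        ((Complex.I * (γ : ℂ) * ((Real.sin θ : ℝ) : ℂ) +
            ((ξ * |Real.cos θ| : ℝ) : ℂ)) / (k : ℂ) - 1) *
          Complex.exp (-Complex.I * (k : ℂ) *
            ((x₁ * Real.cos θ + x₂ * Real.sin θ : ℝ) : ℂ)) *
          Complex.exp (-(R : ℂ) * (((γ * Real.sin θ : ℝ) : ℂ) -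
            Complex.I * ((ξ * |Real.cos θ| : ℝ) : ℂ))))
      =O[Filter.atTop] fun R : ℝ => R⁻¹ :=
  isBigO_integral_mul_exp_neg_mul_sin (by apply Continuous.continuousOn; fun_prop) hγ
    fun θ => ξ * |Real.cos θ|

/-- Guided-mode contribution over the upper semicircle:
`G(R) = ∫₀^π ((iγ sin θ + ξ|cos θ|)/k - 1) e^{-ik(x₁ cos θ + x₂ sin θ)}
e^{-R(γ sin θ - iξ|cos θ|)} dθ` is `O(R⁻¹)` as `R → ∞`. -/
theorem stmt9 (k γ ξ x₁ x₂ : ℝ) (hk : 0 < k) (hγ : 0 < γ) :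
    (fun R : ℝ => ∫ θ in (0 : ℝ)..π,
        ((Complex.I * (γ : ℂ) * ((Real.sin θ : ℝ) : ℂ) +
            ((ξ * |Real.cos θ| : ℝ) : ℂ)) / (k : ℂ) - 1) *
          Complex.exp (-Complex.I * (k : ℂ) *
            ((x₁ * Real.cos θ + x₂ * Real.sin θ : ℝ) : ℂ)) *
          Complex.exp (-(R : ℂ) * (((γ * Real.sin θ : ℝ) : ℂ) -
            Complex.I * ((ξ * |Real.cos θ| : ℝ) : ℂ))))
      =O[Filter.atTop] fun R : ℝ => R⁻¹ :=
  stmt9_general k γ ξ x₁ x₂ hγ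
end

section
/- Let k > 0, d ∈ ℝ and (x, y) ∈ ℝ². Then the function F(R) = ∫_{−π/2}^0 (sin²θ/(1 + cos θ))·exp(−ik(d sin θ − x cos θ − y sin θ))·exp(ikR cos θ) dθ satisfies F(R) = O(R^{−1}) as R → ∞. -/
/-!
Since `sin²θ / (1 + cos θ) = -(tan(θ/2) / k) · (-k sin θ)` and `-k sin θ` is the derivative of the
phase `k cos θ`, one integration by parts against `e^{ikR cos θ}` produces a factor `(ikR)⁻¹`, with
boundary terms and remaining integral bounded uniformly in `R`. The new amplitude
`tan(θ/2) e^{-ikφ(θ)}` is `C¹` on `[-π/2, 0]` because `1 + cos θ ≥ 1` there.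
-/

open scoped Real

open Complex Filter Set MeasureTheory

section OscillatoryIntegral

variable {a b : ℝ} {f f' : ℝ → ℝ} {g g' : ℝ → ℂ}

theorem integral_mul_deriv_mul_exp_eq (hf : ∀ t ∈ uIcc a b, HasDerivAt f (f' t) t)
    (hf' : IntervalIntegrable f' volume a b) (hg : ∀ t ∈ uIcc a b, HasDerivAt g (g' t) t)
    (hg' : IntervalIntegrable g' volume a b) (R : ℝ) :
    I * R * ∫ t in a..b, g t * f' t * exp (I * R * f t) =
      g b * exp (I * R * f b) - g a * exp (I * R * f a) -
        ∫ t in a..b, g' t * exp (I * R * f t) := by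
  have hexp : ∀ t ∈ uIcc a b, HasDerivAt (fun t => exp (I * R * f t))
      (exp (I * R * f t) * (I * R * f' t)) t := fun t ht =>
    ((hf t ht).ofReal_comp.const_mul (I * R)).cexp
  have hexp_cont : ContinuousOn (fun t => exp (I * R * f t)) (uIcc a b) :=
    HasDerivAt.continuousOn hexp
  rw [← intervalIntegral.integral_mul_deriv_eq_deriv_mul hg hexp hg'
    ((IntervalIntegrable.const_mul ⟨hf'.1.ofReal, hf'.2.ofReal⟩ (I * R)).continuousOn_mul
      hexp_cont),
    ← intervalIntegral.integral_const_mul]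
  congr 1 with t
  ring

theorem norm_mul_integral_mul_deriv_mul_exp_le (hf : ∀ t ∈ uIcc a b, HasDerivAt f (f' t) t)
    (hf' : IntervalIntegrable f' volume a b) (hg : ∀ t ∈ uIcc a b, HasDerivAt g (g' t) t)
    (hg' : IntervalIntegrable g' volume a b) (R : ℝ) :
    ‖(R : ℂ) * ∫ t in a..b, g t * f' t * exp (I * R * f t)‖ ≤
      ‖g a‖ + ‖g b‖ + |∫ t in a..b, ‖g' t‖| := by
  have hnorm_exp : ∀ t, ‖exp (I * R * f t)‖ = 1 := fun t => by simp [norm_exp]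
  calc ‖(R : ℂ) * ∫ t in a..b, g t * f' t * exp (I * R * f t)‖
      = ‖I * R * ∫ t in a..b, g t * f' t * exp (I * R * f t)‖ := by
        simp only [norm_mul, norm_I, one_mul]
    _ ≤ ‖g b * exp (I * R * f b)‖ + ‖g a * exp (I * R * f a)‖ +
          ‖∫ t in a..b, g' t * exp (I * R * f t)‖ := by
        rw [integral_mul_deriv_mul_exp_eq hf hf' hg hg']
        exact (norm_sub_le _ _).trans (by gcongr; exact norm_sub_le _ _)
    _ ≤ ‖g b‖ + ‖g a‖ + |∫ t in a..b, ‖g' t‖| := by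
        simp only [norm_mul, hnorm_exp, mul_one]
        gcongr
        refine intervalIntegral.norm_integral_le_abs_integral_norm.trans_eq ?_
        simp only [norm_mul, hnorm_exp, mul_one]
    _ = ‖g a‖ + ‖g b‖ + |∫ t in a..b, ‖g' t‖| := by ring

theorem isBigO_integral_mul_deriv_mul_exp_inv (hf : ∀ t ∈ uIcc a b, HasDerivAt f (f' t) t)
    (hf' : IntervalIntegrable f' volume a b) (hg : ∀ t ∈ uIcc a b, HasDerivAt g (g' t) t)
    (hg' : IntervalIntegrable g' volume a b) :
    (fun R : ℝ => ∫ t in a..b, g t * f' t * exp (I * R * f t)) =O[atTop] fun R => R⁻¹ := by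
  refine Asymptotics.IsBigO.of_bound (‖g a‖ + ‖g b‖ + |∫ t in a..b, ‖g' t‖|) ?_
  filter_upwards [eventually_gt_atTop 0] with R hR
  rw [norm_inv, Real.norm_of_nonneg hR.le, ← div_eq_mul_inv, le_div_iff₀ hR]
  have := norm_mul_integral_mul_deriv_mul_exp_le hf hf' hg hg' R
  rwa [norm_mul, norm_real, Real.norm_of_nonneg hR.le, mul_comm] at this

end OscillatoryIntegral

theorem hasDerivAt_sin_div_one_add_cos {θ : ℝ} (h : 1 + Real.cos θ ≠ 0) :
    HasDerivAt (fun θ => Real.sin θ / (1 + Real.cos θ)) (1 + Real.cos θ)⁻¹ θ := by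
  refine ((Real.hasDerivAt_sin θ).div ((Real.hasDerivAt_cos θ).const_add 1) h).congr_deriv ?_
  field_simp
  nlinarith [Real.sin_sq_add_cos_sq θ]

theorem one_add_cos_ne_zero_of_mem_uIcc {θ : ℝ} (hθ : θ ∈ uIcc (-π / 2) 0) :
    1 + Real.cos θ ≠ 0 := by
  rw [uIcc_of_le (by linarith [Real.pi_pos])] at hθ
  have := Real.cos_nonneg_of_mem_Icc (x := θ)
    ⟨by linarith [hθ.1], by linarith [hθ.2, Real.pi_pos]⟩
  positivity

/-- Integration-by-parts estimate in the grazing case: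
`F(R) = ∫_{-π/2}^0 (sin²θ/(1 + cos θ)) e^{-ik(d sin θ - x cos θ - y sin θ)} e^{ikR cos θ} dθ`
is `O(R⁻¹)` as `R → ∞`. -/
theorem stmt11 (k d x y : ℝ) (hk : 0 < k) :
    (fun R : ℝ => ∫ θ in (-π / 2 : ℝ)..0,
        ((Real.sin θ ^ 2 / (1 + Real.cos θ) : ℝ) : ℂ) *
          Complex.exp (-Complex.I * (k : ℂ) *
            ((d * Real.sin θ - x * Real.cos θ - y * Real.sin θ : ℝ) : ℂ)) *
          Complex.exp (Complex.I * (k : ℂ) * (R : ℂ) * ((Real.cos θ : ℝ) : ℂ)))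
      =O[Filter.atTop] fun R : ℝ => R⁻¹ := by
  set φ : ℝ → ℝ := fun θ => d * Real.sin θ - x * Real.cos θ - y * Real.sin θ
  set E : ℝ → ℂ := fun θ => exp (-I * k * φ θ)
  set φ' : ℝ → ℝ := fun θ => d * Real.cos θ + x * Real.sin θ - y * Real.cos θ
  set g : ℝ → ℂ := fun θ => ((-(Real.sin θ / (1 + Real.cos θ)) / k : ℝ) : ℂ) * E θ
  set g' : ℝ → ℂ := fun θ => ((-(1 + Real.cos θ)⁻¹ / k : ℝ) : ℂ) * E θ + g θ * (-I * k * φ' θ)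
  have hE : ∀ θ, HasDerivAt E (E θ * (-I * k * φ' θ)) θ := fun θ => by
    refine (HasDerivAt.ofReal_comp ?_ |>.const_mul (-I * k)).cexp
    exact (((Real.hasDerivAt_sin θ).const_mul d).sub ((Real.hasDerivAt_cos θ).const_mul x)).sub
      ((Real.hasDerivAt_sin θ).const_mul y) |>.congr_deriv (by ring)
  have hg : ∀ θ ∈ uIcc (-π / 2) 0, HasDerivAt g (g' θ) θ := fun θ hθ =>
    ((hasDerivAt_sin_div_one_add_cos (one_add_cos_ne_zero_of_mem_uIcc hθ)).neg.div_const k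
      |>.ofReal_comp.mul (hE θ)).congr_deriv (by simp only [g', g, Pi.neg_apply]; ring)
  have hg' : ContinuousOn g' (uIcc (-π / 2) 0) := by
    have hcos := fun θ hθ => one_add_cos_ne_zero_of_mem_uIcc (θ := θ) hθ
    fun_prop (disch := assumption)
  have hphase : ∀ θ, HasDerivAt (fun θ => k * Real.cos θ) (-(k * Real.sin θ)) θ := fun θ =>
    (Real.hasDerivAt_cos θ).const_mul k |>.congr_deriv (by ring)
  refine (isBigO_integral_mul_deriv_mul_exp_inv (fun θ _ => hphase θ)
    ((by fun_prop : Continuous _).intervalIntegrable _ _) hg hg'.intervalIntegrable).congr_left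
    fun R => ?_
  refine intervalIntegral.integral_congr fun θ hθ => ?_
  have hamp : Real.sin θ ^ 2 / (1 + Real.cos θ) =
      -(Real.sin θ / (1 + Real.cos θ)) / k * -(k * Real.sin θ) := by
    field_simp
  simp only [g, E, φ, hamp]
  push_cast
  ring_nf
end

section
/- Under the assumptions of the context (in particular γ₁ + ν₁γ₂ ≠ 0, γ₁ − ν₁γ₂ ≠ 0, γ₂ + ν₂γ₃ ≠ 0, γ₂ − ν₂γ₃ ≠ 0, γ₁ ≠ 0, q(γ₂) ≠ 0 and q(−γ₂) ≠ 0), the ratio p₁/q is an even function of γ₂: p₁(−γ₂)/q(−γ₂) = p₁(γ₂)/q(γ₂). -/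
/-- The spectral integrand `p₁/q` of the slab Green function is an even function of `γ₂`. -/
theorem stmt13 (γ₁ γ₂ γ₃ ν₁ ν₂ : ℂ) (d x' y' ξ : ℝ) (hd : 0 < d)
    (R12 R23 q p1 : ℂ → ℂ)
    (hR12 : ∀ g : ℂ, R12 g = (γ₁ - ν₁ * g) / (γ₁ + ν₁ * g))
    (hR23 : ∀ g : ℂ, R23 g = (g - ν₂ * γ₃) / (g + ν₂ * γ₃))
    (hq : ∀ g : ℂ, q g = 1 + R12 g * R23 g * Complex.exp (-2 * g * (d : ℂ)))
    (hp1 : ∀ g : ℂ, p1 g = (R12 g + R23 g * Complex.exp (-2 * g * (d : ℂ))) *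
      Complex.exp (-Complex.I * (ξ : ℂ) * (x' : ℂ) - γ₁ * (y' : ℂ)) / γ₁)
    (h1 : γ₁ + ν₁ * γ₂ ≠ 0) (h2 : γ₁ - ν₁ * γ₂ ≠ 0)
    (h3 : γ₂ + ν₂ * γ₃ ≠ 0) (h4 : γ₂ - ν₂ * γ₃ ≠ 0)
    (h5 : γ₁ ≠ 0) (h6 : q γ₂ ≠ 0) (h7 : q (-γ₂) ≠ 0) :
    p1 (-γ₂) / q (-γ₂) = p1 γ₂ / q γ₂ := by
  have key : ∀ a b E C g : ℂ, a ≠ 0 → b ≠ 0 → E ≠ 0 → g ≠ 0 →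
      ((a⁻¹ + b⁻¹ * E⁻¹) * C / g) * (1 + a * b * E) =
      ((a + b * E) * C / g) * (1 + a⁻¹ * b⁻¹ * E⁻¹) := by
    intro a b E C g ha hb hE hg
    field_simp
    ring
  set a : ℂ := (γ₁ - ν₁ * γ₂) / (γ₁ + ν₁ * γ₂) with hadef
  set b : ℂ := (γ₂ - ν₂ * γ₃) / (γ₂ + ν₂ * γ₃) with hbdef
  have ha : a ≠ 0 := div_ne_zero h2 h1
  have hb : b ≠ 0 := div_ne_zero h4 h3
  have h1' : γ₁ + ν₁ * -γ₂ ≠ 0 := by intro h; apply h2; linear_combination h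
  have h3' : -γ₂ + ν₂ * γ₃ ≠ 0 := by intro h; apply h4; linear_combination -h
  have hEne : Complex.exp (-2 * γ₂ * (d : ℂ)) ≠ 0 := Complex.exp_ne_zero _
  have hE : Complex.exp (-2 * (-γ₂) * (d : ℂ)) = (Complex.exp (-2 * γ₂ * (d : ℂ)))⁻¹ := by
    rw [← Complex.exp_neg]; ring_nf
  have hR12p : R12 γ₂ = a := hR12 γ₂
  have hR23p : R23 γ₂ = b := hR23 γ₂
  have hR12n : R12 (-γ₂) = a⁻¹ := by
    rw [hR12, hadef, inv_div, div_eq_div_iff h1' h2]; ring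
  have hR23n : R23 (-γ₂) = b⁻¹ := by
    rw [hR23, hbdef, inv_div, div_eq_div_iff h3' h4]; ring
  rw [div_eq_div_iff h7 h6, hp1, hp1, hq, hq, hR12p, hR23p, hR12n, hR23n, hE]
  exact key a b _ _ γ₁ ha hb hEne h5
end

section
/- Under the assumptions of the context (in particular γ₁ + ν₁γ₂ ≠ 0, γ₁ − ν₁γ₂ ≠ 0, γ₂ + ν₂γ₃ ≠ 0, γ₂ − ν₂γ₃ ≠ 0, γ₂ ≠ 0, q(γ₂) ≠ 0 and q(−γ₂) ≠ 0), the ratio p₂/q is an even function of γ₂: p₂(−γ₂)/q(−γ₂) = p₂(γ₂)/q(γ₂). -/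
set_option maxHeartbeats 1000000

/-- The spectral integrand `p₂/q` of the slab Green function is an even function of `γ₂`. -/
theorem stmt14 (γ₁ γ₂ γ₃ ν₁ ν₂ : ℂ) (d x' y' ξ : ℝ) (hd : 0 < d)
    (R12 R23 q p2 : ℂ → ℂ)
    (hR12 : ∀ g : ℂ, R12 g = (γ₁ - ν₁ * g) / (γ₁ + ν₁ * g))
    (hR23 : ∀ g : ℂ, R23 g = (g - ν₂ * γ₃) / (g + ν₂ * γ₃))
    (hq : ∀ g : ℂ, q g = 1 + R12 g * R23 g * Complex.exp (-2 * g * (d : ℂ)))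
    (hp2 : ∀ g : ℂ, p2 g = (1 - R12 g) *
      (1 + R23 g * Complex.exp (-2 * g * ((d : ℂ) + (y' : ℂ)))) *
      Complex.exp (-Complex.I * (ξ : ℂ) * (x' : ℂ) + g * (y' : ℂ)) / g)
    (h1 : γ₁ + ν₁ * γ₂ ≠ 0) (h2 : γ₁ - ν₁ * γ₂ ≠ 0)
    (h3 : γ₂ + ν₂ * γ₃ ≠ 0) (h4 : γ₂ - ν₂ * γ₃ ≠ 0)
    (h5 : γ₂ ≠ 0) (h6 : q γ₂ ≠ 0) (h7 : q (-γ₂) ≠ 0) :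
    p2 (-γ₂) / q (-γ₂) = p2 γ₂ / q γ₂ := by
  set a := Complex.exp (γ₂ * (d : ℂ)) with ha
  set b := Complex.exp (γ₂ * (y' : ℂ)) with hb
  set c := Complex.exp (-Complex.I * (ξ : ℂ) * (x' : ℂ)) with hc
  have hane : a ≠ 0 := Complex.exp_ne_zero _
  have hbne : b ≠ 0 := Complex.exp_ne_zero _
  have hcne : c ≠ 0 := Complex.exp_ne_zero _
  have e1 : Complex.exp (-2 * γ₂ * (d : ℂ)) = (a * a)⁻¹ := by
    rw [ha, ← Complex.exp_add, ← Complex.exp_neg]; ring_nf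
  have e2 : Complex.exp (-2 * -γ₂ * (d : ℂ)) = a * a := by
    rw [ha, ← Complex.exp_add]; ring_nf
  have e3 : Complex.exp (-2 * γ₂ * ((d : ℂ) + (y' : ℂ))) = (a * a * b * b)⁻¹ := by
    rw [ha, hb, ← Complex.exp_add, ← Complex.exp_add, ← Complex.exp_add, ← Complex.exp_neg]
    ring_nf
  have e4 : Complex.exp (-2 * -γ₂ * ((d : ℂ) + (y' : ℂ))) = a * a * b * b := by
    rw [ha, hb, ← Complex.exp_add, ← Complex.exp_add, ← Complex.exp_add]; ring_nf
  have e5 : Complex.exp (-Complex.I * (ξ : ℂ) * (x' : ℂ) + γ₂ * (y' : ℂ)) = c * b := by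
    rw [hc, hb, ← Complex.exp_add]
  have e6 : Complex.exp (-Complex.I * (ξ : ℂ) * (x' : ℂ) + -γ₂ * (y' : ℂ)) = c * b⁻¹ := by
    rw [hc, hb, ← Complex.exp_neg, ← Complex.exp_add]; ring_nf
  clear_value a b c
  have s1 : γ₁ - ν₁ * -γ₂ = γ₁ + ν₁ * γ₂ := by ring
  have s2 : γ₁ + ν₁ * -γ₂ = γ₁ - ν₁ * γ₂ := by ring
  have s3 : -γ₂ - ν₂ * γ₃ = -(γ₂ + ν₂ * γ₃) := by ring
  have s4 : -γ₂ + ν₂ * γ₃ = -(γ₂ - ν₂ * γ₃) := by ring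
  have hA : a * a ≠ 0 := mul_ne_zero hane hane
  have hW : a * a * b * b ≠ 0 := mul_ne_zero (mul_ne_zero hA hbne) hbne
  set N : ℂ := (γ₁ + ν₁ * γ₂) * (γ₂ + ν₂ * γ₃) * (a * a) +
      (γ₁ - ν₁ * γ₂) * (γ₂ - ν₂ * γ₃) with hN
  set M : ℂ := (γ₂ + ν₂ * γ₃) * (a * a * b * b) + (γ₂ - ν₂ * γ₃) with hM
  clear_value N M
  have t1 : 1 - (γ₁ - ν₁ * γ₂) / (γ₁ + ν₁ * γ₂) = 2 * ν₁ * γ₂ / (γ₁ + ν₁ * γ₂) := by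
    rw [eq_div_iff h1, sub_mul, div_mul_cancel₀ _ h1]; ring
  have t2 : 1 + (γ₂ - ν₂ * γ₃) / (γ₂ + ν₂ * γ₃) * (a * a * b * b)⁻¹ =
      M / ((γ₂ + ν₂ * γ₃) * (a * a * b * b)) := by
    rw [← div_eq_mul_inv, div_div, add_div' _ _ _ (mul_ne_zero h3 hW), hM]
    congr 1
    ring
  have t1b : 1 - (γ₁ + ν₁ * γ₂) / (γ₁ - ν₁ * γ₂) = -(2 * ν₁ * γ₂) / (γ₁ - ν₁ * γ₂) := by
    rw [eq_div_iff h2, sub_mul, div_mul_cancel₀ _ h2]; ring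
  have t4 : 1 + (γ₂ + ν₂ * γ₃) / (γ₂ - ν₂ * γ₃) * (a * a * b * b) =
      M / (γ₂ - ν₂ * γ₃) := by
    rw [div_mul_eq_mul_div, add_div' _ _ _ h4, hM]
    congr 1
    ring
  have hq1 : q γ₂ = N / ((γ₁ + ν₁ * γ₂) * (γ₂ + ν₂ * γ₃) * (a * a)) := by
    rw [hq, hR12, hR23, e1, div_mul_div_comm, ← div_eq_mul_inv, div_div,
      add_div' _ _ _ (mul_ne_zero (mul_ne_zero h1 h3) hA), hN]
    congr 1
    ring
  have hq2 : q (-γ₂) = N / ((γ₁ - ν₁ * γ₂) * (γ₂ - ν₂ * γ₃)) := by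
    rw [hq, hR12, hR23, e2, s1, s2, s3, s4, neg_div_neg_eq, div_mul_div_comm,
      div_mul_eq_mul_div, add_div' _ _ _ (mul_ne_zero h2 h4), hN]
    congr 1
    ring
  have hp2a : p2 γ₂ = (2 * ν₁ * γ₂) * M * c * b /
      ((γ₁ + ν₁ * γ₂) * (γ₂ + ν₂ * γ₃) * (a * a * b * b) * γ₂) := by
    rw [hp2, hR12, hR23, e3, e5, t1, t2, div_mul_div_comm, div_mul_eq_mul_div, div_div]
    rw [div_eq_div_iff
      (mul_ne_zero (mul_ne_zero h1 (mul_ne_zero h3 hW)) h5)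
      (mul_ne_zero (mul_ne_zero (mul_ne_zero h1 h3) hW) h5)]
    ring
  have hp2b : p2 (-γ₂) = (2 * ν₁ * γ₂) * M * c /
      ((γ₁ - ν₁ * γ₂) * (γ₂ - ν₂ * γ₃) * b * γ₂) := by
    rw [hp2, hR12, hR23, e4, e6, s1, s2, s3, s4, neg_div_neg_eq, t1b, t4,
      div_mul_div_comm, ← div_eq_mul_inv c b, div_mul_div_comm, div_div]
    rw [div_eq_div_iff
      (mul_ne_zero (mul_ne_zero (mul_ne_zero h2 h4) hbne) (neg_ne_zero.mpr h5))
      (mul_ne_zero (mul_ne_zero (mul_ne_zero h2 h4) hbne) h5)]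
    ring
  have hNne : N ≠ 0 := by
    intro h
    rw [hq1, h, zero_div] at h6
    exact h6 rfl
  rw [hq1] at h6
  rw [hq2] at h7
  rw [hq1, hq2, hp2a, hp2b, div_eq_div_iff h7 h6, div_mul_div_comm, div_mul_div_comm,
    div_eq_div_iff
      (mul_ne_zero (mul_ne_zero (mul_ne_zero (mul_ne_zero h2 h4) hbne) h5)
        (mul_ne_zero (mul_ne_zero h1 h3) hA))
      (mul_ne_zero (mul_ne_zero (mul_ne_zero (mul_ne_zero h1 h3) hW) h5)
        (mul_ne_zero h2 h4))]
  ring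
end

section
/- Under the assumptions of the context (in particular γ₁ + ν₁γ₂ ≠ 0, γ₁ − ν₁γ₂ ≠ 0, γ₂ + ν₂γ₃ ≠ 0, γ₂ − ν₂γ₃ ≠ 0, γ₃ ≠ 0, q(γ₂) ≠ 0 and q(−γ₂) ≠ 0), the ratio p₃/q is an even function of γ₂: p₃(−γ₂)/q(−γ₂) = p₃(γ₂)/q(γ₂). -/
/-- The spectral integrand `p₃/q` of the slab Green function is an even function of `γ₂`. -/
theorem stmt15 (γ₁ γ₂ γ₃ ν₁ ν₂ : ℂ) (d x' y' ξ : ℝ) (hd : 0 < d)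
    (R12 R23 q p3 : ℂ → ℂ)
    (hR12 : ∀ g : ℂ, R12 g = (γ₁ - ν₁ * g) / (γ₁ + ν₁ * g))
    (hR23 : ∀ g : ℂ, R23 g = (g - ν₂ * γ₃) / (g + ν₂ * γ₃))
    (hq : ∀ g : ℂ, q g = 1 + R12 g * R23 g * Complex.exp (-2 * g * (d : ℂ)))
    (hp3 : ∀ g : ℂ, p3 g = (1 - R12 g) * (1 - R23 g) * Complex.exp (-g * (d : ℂ)) *
      Complex.exp (-Complex.I * (ξ : ℂ) * (x' : ℂ) + γ₃ * ((y' : ℂ) + (d : ℂ))) / γ₃)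
    (h1 : γ₁ + ν₁ * γ₂ ≠ 0) (h2 : γ₁ - ν₁ * γ₂ ≠ 0)
    (h3 : γ₂ + ν₂ * γ₃ ≠ 0) (h4 : γ₂ - ν₂ * γ₃ ≠ 0)
    (h5 : γ₃ ≠ 0) (h6 : q γ₂ ≠ 0) (h7 : q (-γ₂) ≠ 0) :
    p3 (-γ₂) / q (-γ₂) = p3 γ₂ / q γ₂ := by
  set E : ℂ := Complex.exp (γ₂ * d) with hE_def
  have hE : E ≠ 0 := Complex.exp_ne_zero _
  set C : ℂ := Complex.exp (-Complex.I * (ξ : ℂ) * (x' : ℂ) + γ₃ * ((y' : ℂ) + (d : ℂ))) with hC_def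
  have e1 : Complex.exp (-(-γ₂) * (d : ℂ)) = E := by rw [hE_def]; ring_nf
  have e2 : Complex.exp (-γ₂ * (d : ℂ)) = E⁻¹ := by
    rw [hE_def, ← Complex.exp_neg]; ring_nf
  have e3 : Complex.exp (-2 * γ₂ * (d : ℂ)) = E⁻¹ * E⁻¹ := by
    rw [hE_def, ← Complex.exp_neg, ← Complex.exp_add]; ring_nf
  have e4 : Complex.exp (-2 * (-γ₂) * (d : ℂ)) = E * E := by
    rw [hE_def, ← Complex.exp_add]; ring_nf
  have h3' : -γ₂ + ν₂ * γ₃ ≠ 0 := fun h => h4 (by linear_combination -h)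
  have h2' : γ₁ - ν₁ * -γ₂ ≠ 0 := fun h => h1 (by linear_combination h)
  have h1' : γ₁ + ν₁ * -γ₂ ≠ 0 := fun h => h2 (by linear_combination h)
  set D : ℂ := (γ₁ + ν₁ * γ₂) * (γ₂ + ν₂ * γ₃) * E + (γ₁ - ν₁ * γ₂) * (γ₂ - ν₂ * γ₃) * E⁻¹
    with hD_def
  have ha : (γ₁ + ν₁ * γ₂) * (γ₂ + ν₂ * γ₃) * E ≠ 0 := by
    exact mul_ne_zero (mul_ne_zero h1 h3) hE
  have hb : (γ₁ - ν₁ * γ₂) * (-γ₂ + ν₂ * γ₃) * E⁻¹ ≠ 0 := by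
    exact mul_ne_zero (mul_ne_zero h2 h3') (inv_ne_zero hE)
  have key1 : p3 γ₂ * ((γ₁ + ν₁ * γ₂) * (γ₂ + ν₂ * γ₃) * E) = 4 * ν₁ * ν₂ * γ₂ * C := by
    rw [hp3, hR12, hR23, e2]
    field_simp [h1, h2, h3, h3', h1', h2', h5, hE]
    ring
  have key2 : q γ₂ * ((γ₁ + ν₁ * γ₂) * (γ₂ + ν₂ * γ₃) * E) = D := by
    rw [hq, hR12, hR23, e3, hD_def]
    field_simp [h1, h2, h3, h3', h1', h2', h5, hE]
  have r1 : γ₁ + ν₁ * -γ₂ = γ₁ - ν₁ * γ₂ := by ring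
  have r2 : γ₁ - ν₁ * -γ₂ = γ₁ + ν₁ * γ₂ := by ring
  have r3 : -γ₂ - ν₂ * γ₃ = -(γ₂ + ν₂ * γ₃) := by ring
  have key3 : p3 (-γ₂) * ((γ₁ - ν₁ * γ₂) * (-γ₂ + ν₂ * γ₃) * E⁻¹) = -(4 * ν₁ * ν₂ * γ₂ * C) := by
    rw [hp3, hR12, hR23, e1, r1, r2, r3]
    field_simp [h2, h3', h5, hE]
    ring
  have key4 : q (-γ₂) * ((γ₁ - ν₁ * γ₂) * (-γ₂ + ν₂ * γ₃) * E⁻¹) = -D := by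
    rw [hq, hR12, hR23, e4, hD_def, r1, r2, r3]
    field_simp [h2, h3', hE]
    ring
  have hD : D ≠ 0 := by
    rw [← key2]; exact mul_ne_zero h6 ha
  calc p3 (-γ₂) / q (-γ₂)
      = (p3 (-γ₂) * ((γ₁ - ν₁ * γ₂) * (-γ₂ + ν₂ * γ₃) * E⁻¹)) /
        (q (-γ₂) * ((γ₁ - ν₁ * γ₂) * (-γ₂ + ν₂ * γ₃) * E⁻¹)) := by
        rw [mul_div_mul_right _ _ hb]
    _ = (-(4 * ν₁ * ν₂ * γ₂ * C)) / (-D) := by rw [key3, key4]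
    _ = (4 * ν₁ * ν₂ * γ₂ * C) / D := by rw [neg_div_neg_eq]
    _ = (p3 γ₂ * ((γ₁ + ν₁ * γ₂) * (γ₂ + ν₂ * γ₃) * E)) /
        (q γ₂ * ((γ₁ + ν₁ * γ₂) * (γ₂ + ν₂ * γ₃) * E)) := by rw [key1, key2]
    _ = p3 γ₂ / q γ₂ := by rw [mul_div_mul_right _ _ ha]
end
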